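/- Let φ : ℝ³ → ℂ be smooth with |φ(p)| < 1 for all p, set F = (1−|φ|²)^{−1/2}, and define the complex vector fields Z₁ = F(Z̊₁ + φ̄ Z̊_{1̄}) and Z_{1̄} = F(Z̊_{1̄} + φ Z̊₁) (acting on functions as first-order differential operators). For a smooth real-valued function u on ℝ³ define the sublaplacian Δ_b^{φ,Θ}u = −( Z_{1̄}(Z₁u) − θ₁¹(Z_{1̄})·Z₁u ) + conjugate, where θ₁¹(Z_{1̄}) denotes the complex-linear evaluation of the 1-form θ₁¹ on the complex vector Z_{1̄}, and 'conjugate' means adding the pointwise complex conjugate of the preceding expression. Then, writing u₁ = Z̊₁u, u_{1̄} = Z̊_{1̄}u, u₁₁ = Z̊₁(Z̊₁u), u_{1̄1̄} = Z̊_{1̄}(Z̊_{1̄}u), (|φ|²)₁ = Z̊₁(|φ|²), (|φ|²)_{1̄} = Z̊_{1̄}(|φ|²), and Δ̊_b u = −(Z̊₁(Z̊_{1̄}u) + Z̊_{1̄}(Z̊₁u)) = −½(e̊₁(e̊₁u) + e̊₂(e̊₂u)), one has the identity on all of ℝ³: Δ_b^{φ,Θ}u = [(1+|φ|²)/(1−|φ|²)]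 Δ̊_b u − [2φ̄/(1−|φ|²)] u_{1̄1̄} − [2φ/(1−|φ|²)] u₁₁ − [ (2φ̄_{1̄} + (|φ|²)₁)/(1−|φ|²) + 2φ̄·Z̊_{1̄}((1−|φ|²)^{−1}) + (1+|φ|²)·Z̊₁((1−|φ|²)^{−1}) ] u_{1̄} − [ (2φ₁ + (|φ|²)_{1̄})/(1−|φ|²) + (1+|φ|²)·Z̊_{1̄}((1−|φ|²)^{−1}) + 2φ·Z̊₁((1−|φ|²)^{−1}) ] u₁. (The sublaplacian formula of Proposition 3.2 of the paper.) -/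

import Mathlib

noncomputable section

open Complex

/-- Points of the Heisenberg group `H₁ = ℝ³`, coordinates `p = (x, y, z)`. -/
abbrev H1 : Type := ℝ × ℝ × ℝ

/-- The left-invariant vector field `e̊₁ = ∂/∂x + y ∂/∂z` at `p = (x,y,z)`. -/
def ee1 (p : H1) : H1 := (1, 0, p.2.1)

/-- The left-invariant vector field `e̊₂ = ∂/∂y − x ∂/∂z` at `p = (x,y,z)`. -/
def ee2 (p : H1) : H1 := (0, 1, -p.1)

/-- The left-invariant vector field `T = ∂/∂z`. -/
def Tvec (_ : H1) : H1 := (0, 0, 1)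

/-- The standard contact form `Θ = dz + x dy − y dx`: `Θ_p(u) = u₃ + x u₂ − y u₁`. -/
def Theta (p u : H1) : ℝ := u.2.2 + p.1 * u.2.1 - p.2.1 * u.1

/-- `Θ` viewed as a complex-valued 1-form. -/
def ThetaC (p u : H1) : ℂ := (Theta p u : ℂ)

/-- `Z̊₁ f = ½(e̊₁f − i e̊₂f)`, acting on smooth complex-valued functions via the
real Fréchet derivative. -/
def Z1 (f : H1 → ℂ) (p : H1) : ℂ :=
  (1 / 2) * (fderiv ℝ f p (ee1 p) - Complex.I * fderiv ℝ f p (ee2 p))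

/-- `Z̊_{1̄} f = ½(e̊₁f + i e̊₂f)`. -/
def Z1b (f : H1 → ℂ) (p : H1) : ℂ :=
  (1 / 2) * (fderiv ℝ f p (ee1 p) + Complex.I * fderiv ℝ f p (ee2 p))

/-- `Tf = ∂f/∂z`. -/
def Tder (f : H1 → ℂ) (p : H1) : ℂ := fderiv ℝ f p (Tvec p)

/-- The standard coframe `θ̊¹ = dx + i dy`. -/
def th01 (_ : H1) (u : H1) : ℂ := (u.1 : ℂ) + Complex.I * u.2.1

/-- The standard coframe `θ̊^{1̄} = dx − i dy`. -/
def th01b (_ : H1) (u : H1) : ℂ := (u.1 : ℂ) - Complex.I * u.2.1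

/-- Wedge of complex-valued 1-forms: `(α∧β)_p(u,v) = α_p(u)β_p(v) − α_p(v)β_p(u)`. -/
def wedge (α β : H1 → H1 → ℂ) (p u v : H1) : ℂ := α p u * β p v - α p v * β p u

/-- Exterior derivative of a complex-valued 1-form:
`dω_p(u,v) = (Dω_p(u))(v) − (Dω_p(v))(u)`. -/
def extD (ω : H1 → H1 → ℂ) (p u v : H1) : ℂ :=
  fderiv ℝ (fun q => ω q v) p u - fderiv ℝ (fun q => ω q u) p v

/-- `φ̄`, the pointwise complex conjugate of `φ`. -/
def cconj (φ : H1 → ℂ) : H1 → ℂ := fun p => (starRingEnd ℂ) (φ p)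

/-- `F = (1 − |φ|²)^{−1/2}`. -/
def Ff (φ : H1 → ℂ) (p : H1) : ℝ := (Real.sqrt (1 - ‖φ p‖ ^ 2))⁻¹

/-- The function `(1 − |φ|²)^{−1}` viewed as complex-valued. -/
def invOneSub (φ : H1 → ℂ) : H1 → ℂ := fun p => (((1 - ‖φ p‖ ^ 2)⁻¹ : ℝ) : ℂ)

/-- The coframe `θ¹ = F(θ̊¹ − φ θ̊^{1̄})`. -/
def th1 (φ : H1 → ℂ) (p u : H1) : ℂ := (Ff φ p : ℂ) * (th01 p u - φ p * th01b p u)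

/-- The coframe `θ^{1̄} = F(θ̊^{1̄} − φ̄ θ̊¹)`. -/
def th1bar (φ : H1 → ℂ) (p u : H1) : ℂ :=
  (Ff φ p : ℂ) * (th01b p u - (starRingEnd ℂ) (φ p) * th01 p u)

/-- The torsion coefficient `A^1_{1̄} = −φ₀/(1 − |φ|²)`. -/
def A11b (φ : H1 → ℂ) (p : H1) : ℂ := -Tder φ p * invOneSub φ p

/-- The torsion form `τ¹ = A^1_{1̄} θ^{1̄}`. -/
def tau1 (φ : H1 → ℂ) (p u : H1) : ℂ := A11b φ p * th1bar φ p u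

/-- The `θ̊¹`-coefficient of the connection form:
`(φ̄_{1̄} + φ̄φ₁)/(1−|φ|²) + φ̄·Z̊_{1̄}((1−|φ|²)⁻¹) + Z̊₁((1−|φ|²)⁻¹)`. -/
def connC1 (φ : H1 → ℂ) (p : H1) : ℂ :=
  (Z1b (cconj φ) p + (starRingEnd ℂ) (φ p) * Z1 φ p) * invOneSub φ p +
    (starRingEnd ℂ) (φ p) * Z1b (invOneSub φ) p + Z1 (invOneSub φ) p

/-- The (negative of the) `θ̊^{1̄}`-coefficient of the connection form:
`(φ₁ + φφ̄_{1̄})/(1−|φ|²) + |φ|²·Z̊_{1̄}((1−|φ|²)⁻¹) + φ·Z̊₁((1−|φ|²)⁻¹)`. -/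
def connC2 (φ : H1 → ℂ) (p : H1) : ℂ :=
  (Z1 φ p + φ p * Z1b (cconj φ) p) * invOneSub φ p +
    ((‖φ p‖ ^ 2 : ℝ) : ℂ) * Z1b (invOneSub φ) p + φ p * Z1 (invOneSub φ) p

/-- The pseudohermitian connection form
`θ₁¹ = −d(ln F) + [φ̄φ₀/(1−|φ|²)] Θ + connC1 · θ̊¹ − connC2 · θ̊^{1̄}`. -/
def conn (φ : H1 → ℂ) (p u : H1) : ℂ :=
  -((fderiv ℝ (fun q => Real.log (Ff φ q)) p u : ℝ) : ℂ) +
    ((starRingEnd ℂ) (φ p) * Tder φ p * invOneSub φ p) * ThetaC p u +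
    connC1 φ p * th01 p u - connC2 φ p * th01b p u

/-- The vector field `Z₁ = F(Z̊₁ + φ̄ Z̊_{1̄})` acting on complex-valued functions. -/
def Z1full (φ : H1 → ℂ) (f : H1 → ℂ) (p : H1) : ℂ :=
  (Ff φ p : ℂ) * (Z1 f p + (starRingEnd ℂ) (φ p) * Z1b f p)

/-- The vector field `Z_{1̄} = F(Z̊_{1̄} + φ Z̊₁)` acting on complex-valued functions. -/
def Z1bfull (φ : H1 → ℂ) (f : H1 → ℂ) (p : H1) : ℂ :=
  (Ff φ p : ℂ) * (Z1b f p + φ p * Z1 f p)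

/-- The complex-linear evaluation `θ₁¹(Z_{1̄})` of the connection form on the complex
tangent vector `Z_{1̄} = F(Z̊_{1̄} + φ Z̊₁)`, with `Z̊₁ = ½(e̊₁ − i e̊₂)`,
`Z̊_{1̄} = ½(e̊₁ + i e̊₂)`. -/
def connAtZ1b (φ : H1 → ℂ) (p : H1) : ℂ :=
  (Ff φ p : ℂ) *
    ((1 / 2) * (conn φ p (ee1 p) + Complex.I * conn φ p (ee2 p)) +
      φ p * ((1 / 2) * (conn φ p (ee1 p) - Complex.I * conn φ p (ee2 p))))

/-- The sublaplacian `Δ_b^{φ,Θ}u = −(Z_{1̄}(Z₁u) − θ₁¹(Z_{1̄})·Z₁u) + conjugate`. -/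
def subLap (φ : H1 → ℂ) (u : H1 → ℝ) (p : H1) : ℂ :=
  -(Z1bfull φ (Z1full φ fun q => (u q : ℂ)) p -
      connAtZ1b φ p * Z1full φ (fun q => (u q : ℂ)) p) +
    (starRingEnd ℂ)
      (-(Z1bfull φ (Z1full φ fun q => (u q : ℂ)) p -
        connAtZ1b φ p * Z1full φ (fun q => (u q : ℂ)) p))

/-- The standard sublaplacian of the Heisenberg group:
`Δ̊_b u = −(Z̊₁(Z̊_{1̄}u) + Z̊_{1̄}(Z̊₁u))`. -/
def subLap0 (u : H1 → ℝ) (p : H1) : ℂ :=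
  -(Z1 (Z1b fun q => (u q : ℂ)) p + Z1b (Z1 fun q => (u q : ℂ)) p)

open Complex in
lemma fderiv_ofReal' {r : H1 → ℝ} {p : H1} (hr : DifferentiableAt ℝ r p) (w : H1) :
    fderiv ℝ (fun q => ((r q : ℝ) : ℂ)) p w = ((fderiv ℝ r p w : ℝ) : ℂ) := by
  have h : fderiv ℝ (Complex.ofRealCLM ∘ r) p = Complex.ofRealCLM.comp (fderiv ℝ r p) :=
    (Complex.ofRealCLM.hasFDerivAt.comp p hr.hasFDerivAt).fderiv
  have h2 : (fun q => ((r q : ℝ) : ℂ)) = Complex.ofRealCLM ∘ r := rfl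
  rw [h2, h]; rfl

open Complex in
lemma fderiv_conj' {f : H1 → ℂ} {p : H1} (hf : DifferentiableAt ℝ f p) (w : H1) :
    fderiv ℝ (fun q => (starRingEnd ℂ) (f q)) p w = (starRingEnd ℂ) (fderiv ℝ f p w) := by
  have h : fderiv ℝ (Complex.conjCLE.toContinuousLinearMap ∘ f) p
      = Complex.conjCLE.toContinuousLinearMap.comp (fderiv ℝ f p) :=
    (Complex.conjCLE.toContinuousLinearMap.hasFDerivAt.comp p hf.hasFDerivAt).fderiv
  have h2 : (fun q => (starRingEnd ℂ) (f q)) = Complex.conjCLE.toContinuousLinearMap ∘ f := by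
    funext q; simp
  rw [h2, h]; simp

lemma Z1_mul' {f g : H1 → ℂ} {p : H1} (hf : DifferentiableAt ℝ f p)
    (hg : DifferentiableAt ℝ g p) :
    Z1 (fun q => f q * g q) p = Z1 f p * g p + f p * Z1 g p := by
  unfold Z1
  rw [fderiv_fun_mul hf hg]
  simp only [ContinuousLinearMap.add_apply, ContinuousLinearMap.smul_apply, smul_eq_mul]
  ring

lemma Z1b_mul' {f g : H1 → ℂ} {p : H1} (hf : DifferentiableAt ℝ f p)
    (hg : DifferentiableAt ℝ g p) :
    Z1b (fun q => f q * g q) p = Z1b f p * g p + f p * Z1b g p := by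
  unfold Z1b
  rw [fderiv_fun_mul hf hg]
  simp only [ContinuousLinearMap.add_apply, ContinuousLinearMap.smul_apply, smul_eq_mul]
  ring

lemma Z1_add' {f g : H1 → ℂ} {p : H1} (hf : DifferentiableAt ℝ f p)
    (hg : DifferentiableAt ℝ g p) :
    Z1 (fun q => f q + g q) p = Z1 f p + Z1 g p := by
  unfold Z1
  rw [fderiv_fun_add hf hg]
  simp only [ContinuousLinearMap.add_apply]
  ring

lemma Z1b_add' {f g : H1 → ℂ} {p : H1} (hf : DifferentiableAt ℝ f p)
    (hg : DifferentiableAt ℝ g p) :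
    Z1b (fun q => f q + g q) p = Z1b f p + Z1b g p := by
  unfold Z1b
  rw [fderiv_fun_add hf hg]
  simp only [ContinuousLinearMap.add_apply]
  ring

open Complex in
lemma Z1b_conj' {f : H1 → ℂ} {p : H1} (hf : DifferentiableAt ℝ f p) :
    Z1b (cconj f) p = (starRingEnd ℂ) (Z1 f p) := by
  unfold Z1b Z1 cconj
  rw [fderiv_conj' hf, fderiv_conj' hf]
  simp only [map_mul, map_sub, map_add, map_div₀, map_one, map_ofNat, Complex.conj_I, Complex.conj_ofReal]
  ring

open Complex in
lemma Z1_conj' {f : H1 → ℂ} {p : H1} (hf : DifferentiableAt ℝ f p) :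
    Z1 (cconj f) p = (starRingEnd ℂ) (Z1b f p) := by
  unfold Z1b Z1 cconj
  rw [fderiv_conj' hf, fderiv_conj' hf]
  simp only [map_mul, map_sub, map_add, map_div₀, map_one, map_ofNat, Complex.conj_I, Complex.conj_ofReal]
  ring

open Complex in
lemma Z1b_ofReal' {r : H1 → ℝ} {p : H1} (hr : DifferentiableAt ℝ r p) :
    Z1b (fun q => ((r q : ℝ) : ℂ)) p = (starRingEnd ℂ) (Z1 (fun q => ((r q : ℝ) : ℂ)) p) := by
  unfold Z1b Z1
  rw [fderiv_ofReal' hr, fderiv_ofReal' hr]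
  simp only [map_mul, map_sub, map_add, map_div₀, map_one, map_ofNat, Complex.conj_I, Complex.conj_ofReal]
  ring

open Complex in
lemma Z1b_conj'' {f : H1 → ℂ} {p : H1} (hf : DifferentiableAt ℝ f p) :
    Z1b (fun q => (starRingEnd ℂ) (f q)) p = (starRingEnd ℂ) (Z1 f p) := Z1b_conj' hf

open Complex in
lemma Z1_conj'' {f : H1 → ℂ} {p : H1} (hf : DifferentiableAt ℝ f p) :
    Z1 (fun q => (starRingEnd ℂ) (f q)) p = (starRingEnd ℂ) (Z1b f p) := Z1_conj' hf

lemma contDiff_ee1' : ContDiff ℝ (⊤ : ℕ∞) ee1 := by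
  unfold ee1
  exact contDiff_const.prodMk (contDiff_const.prodMk (contDiff_fst.comp contDiff_snd))

lemma contDiff_ee2' : ContDiff ℝ (⊤ : ℕ∞) ee2 := by
  unfold ee2
  exact contDiff_const.prodMk (contDiff_const.prodMk contDiff_fst.neg)

lemma contDiff_Z1' {f : H1 → ℂ} (hf : ContDiff ℝ (⊤ : ℕ∞) f) : ContDiff ℝ (⊤ : ℕ∞) (Z1 f) := by
  unfold Z1
  exact contDiff_const.mul
    (((hf.fderiv_right (by simp)).clm_apply contDiff_ee1').sub
      (contDiff_const.mul ((hf.fderiv_right (by simp)).clm_apply contDiff_ee2')))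

lemma contDiff_Z1b' {f : H1 → ℂ} (hf : ContDiff ℝ (⊤ : ℕ∞) f) : ContDiff ℝ (⊤ : ℕ∞) (Z1b f) := by
  unfold Z1b
  exact contDiff_const.mul
    (((hf.fderiv_right (by simp)).clm_apply contDiff_ee1').add
      (contDiff_const.mul ((hf.fderiv_right (by simp)).clm_apply contDiff_ee2')))

set_option maxHeartbeats 4000000 in
open Complex in
/-- Proposition 3.2 (sublaplacian part): the explicit formula for `Δ_b^{φ,Θ}u` in terms
of Heisenberg-group derivatives. -/
theorem sublaplacian_formula (φ : H1 → ℂ) (hφ : ContDiff ℝ (⊤ : ℕ∞) φ) (hlt : ∀ p, ‖φ p‖ < 1)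
    (u : H1 → ℝ) (hu : ContDiff ℝ (⊤ : ℕ∞) u) (p : H1) :
    subLap φ u p =
      (((1 + ‖φ p‖ ^ 2) / (1 - ‖φ p‖ ^ 2) : ℝ) : ℂ) * subLap0 u p -
        (2 * (starRingEnd ℂ) (φ p) * invOneSub φ p) * Z1b (Z1b fun q => (u q : ℂ)) p -
        (2 * φ p * invOneSub φ p) * Z1 (Z1 fun q => (u q : ℂ)) p -
        ((2 * Z1b (cconj φ) p + Z1 (fun q => ((‖φ q‖ ^ 2 : ℝ) : ℂ)) p) * invOneSub φ p +
            2 * (starRingEnd ℂ) (φ p) * Z1b (invOneSub φ) p +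
            (1 + ((‖φ p‖ ^ 2 : ℝ) : ℂ)) * Z1 (invOneSub φ) p) *
          Z1b (fun q => (u q : ℂ)) p -
        ((2 * Z1 φ p + Z1b (fun q => ((‖φ q‖ ^ 2 : ℝ) : ℂ)) p) * invOneSub φ p +
            (1 + ((‖φ p‖ ^ 2 : ℝ) : ℂ)) * Z1b (invOneSub φ) p +
            2 * φ p * Z1 (invOneSub φ) p) *
          Z1 (fun q => (u q : ℂ)) p := by
  -- ## basic differentiability
  have hφd : DifferentiableAt ℝ φ p := (hφ.differentiable (by simp)) p
  have hcφ : ContDiff ℝ (⊤ : ℕ∞) (fun q => (starRingEnd ℂ) (φ q)) := by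
    have h : (fun q => (starRingEnd ℂ) (φ q)) = (⇑Complex.conjCLE ∘ φ) := by
      funext q; simp
    rw [h]; exact Complex.conjCLE.contDiff.comp hφ
  have hud : ContDiff ℝ (⊤ : ℕ∞) (fun q => ((u q : ℝ) : ℂ)) :=
    Complex.ofRealCLM.contDiff.comp hu
  have hZ1v : ContDiff ℝ (⊤ : ℕ∞) (Z1 (fun q => ((u q : ℝ) : ℂ))) := contDiff_Z1' hud
  have hZ1bv : ContDiff ℝ (⊤ : ℕ∞) (Z1b (fun q => ((u q : ℝ) : ℂ))) := contDiff_Z1b' hud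
  -- the positive function `s = 1 - ‖φ‖²`
  have hSpos : ∀ q, (0:ℝ) < 1 - ‖φ q‖ ^ 2 := by
    intro q
    nlinarith [hlt q, norm_nonneg (φ q)]
  have hSne : ∀ q, (1:ℝ) - ‖φ q‖ ^ 2 ≠ 0 := fun q => ne_of_gt (hSpos q)
  have hS : ContDiff ℝ (⊤ : ℕ∞) (fun q => (1:ℝ) - ‖φ q‖ ^ 2) :=
    contDiff_const.sub (hφ.norm_sq (𝕜 := ℝ))
  have hrd : ContDiff ℝ (⊤ : ℕ∞) (fun q => ((1:ℝ) - ‖φ q‖ ^ 2)⁻¹) := hS.inv hSne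
  have hr0 : ((1:ℝ) - ‖φ p‖ ^ 2)⁻¹ ≠ 0 := inv_ne_zero (hSne p)
  have hrpos : (0:ℝ) < ((1:ℝ) - ‖φ p‖ ^ 2)⁻¹ := inv_pos.mpr (hSpos p)
  -- `Ff = sqrt ∘ r`
  have hFfeq : Ff φ = fun q => Real.sqrt (((1:ℝ) - ‖φ q‖ ^ 2)⁻¹) := by
    funext q; unfold Ff; rw [Real.sqrt_inv]
  have hFf_diff : DifferentiableAt ℝ (Ff φ) p := by
    rw [hFfeq]
    exact ((Real.contDiffAt_sqrt hr0).comp p hrd.contDiffAt).differentiableAt (by simp)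
  have hFfpos : 0 < Ff φ p := by
    rw [hFfeq]; exact Real.sqrt_pos.mpr hrpos
  have hsq : Ff φ p ^ 2 = ((1:ℝ) - ‖φ p‖ ^ 2)⁻¹ := by
    rw [hFfeq]; exact Real.sq_sqrt hrpos.le
  have hr1 : HasFDerivAt (fun q => ((1:ℝ) - ‖φ q‖ ^ 2)⁻¹)
      (fderiv ℝ (fun q => ((1:ℝ) - ‖φ q‖ ^ 2)⁻¹) p) p :=
    ((hrd.differentiable (by simp)) p).hasFDerivAt
  -- derivative of Ff
  have hFderiv : fderiv ℝ (Ff φ) p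
      = ((1/2) * ((1:ℝ) - ‖φ p‖ ^ 2) * Ff φ p) • fderiv ℝ (fun q => ((1:ℝ) - ‖φ q‖ ^ 2)⁻¹) p := by
    have h2 : HasFDerivAt (fun q => Real.sqrt (((1:ℝ) - ‖φ q‖ ^ 2)⁻¹))
        ((1 / (2 * Real.sqrt (((1:ℝ) - ‖φ p‖ ^ 2)⁻¹))) • fderiv ℝ (fun q => ((1:ℝ) - ‖φ q‖ ^ 2)⁻¹) p) p :=
      (Real.hasDerivAt_sqrt hr0).comp_hasFDerivAt p hr1
    rw [hFfeq, h2.fderiv]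
    congr 1
    have hs : Real.sqrt (((1:ℝ) - ‖φ p‖ ^ 2)⁻¹) = Ff φ p := by rw [hFfeq]
    rw [hs]
    have h3 : Ff φ p * ((1:ℝ) - ‖φ p‖ ^ 2) * Ff φ p = 1 := by
      have h4 : Ff φ p * ((1:ℝ) - ‖φ p‖ ^ 2) * Ff φ p
          = Ff φ p ^ 2 * ((1:ℝ) - ‖φ p‖ ^ 2) := by ring
      rw [h4, hsq, inv_mul_cancel₀ (hSne p)]
    rw [div_eq_iff (by positivity : (2:ℝ) * Ff φ p ≠ 0)]
    nlinarith [h3]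
  -- derivative of log Ff
  have hlnF : fderiv ℝ (fun q => Real.log (Ff φ q)) p
      = ((1/2) * ((1:ℝ) - ‖φ p‖ ^ 2)) • fderiv ℝ (fun q => ((1:ℝ) - ‖φ q‖ ^ 2)⁻¹) p := by
    have heq : (fun q => Real.log (Ff φ q))
        = fun q => (1/2) * Real.log (((1:ℝ) - ‖φ q‖ ^ 2)⁻¹) := by
      funext q
      rw [hFfeq, Real.log_sqrt (inv_pos.mpr (hSpos q)).le]
      ring
    rw [heq]
    have h2 : HasFDerivAt (fun q => Real.log (((1:ℝ) - ‖φ q‖ ^ 2)⁻¹))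
        ((((1:ℝ) - ‖φ p‖ ^ 2)⁻¹)⁻¹ • fderiv ℝ (fun q => ((1:ℝ) - ‖φ q‖ ^ 2)⁻¹) p) p :=
      HasDerivAt.comp_hasFDerivAt (h₂ := Real.log) p (Real.hasDerivAt_log hr0) hr1
    rw [(h2.const_mul ((1:ℝ)/2)).fderiv, smul_smul, inv_inv]
  -- real derivative atoms
  set R1 : ℝ := fderiv ℝ (fun q => ((1:ℝ) - ‖φ q‖ ^ 2)⁻¹) p (ee1 p) with hR1
  set R2 : ℝ := fderiv ℝ (fun q => ((1:ℝ) - ‖φ q‖ ^ 2)⁻¹) p (ee2 p) with hR2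
  have hrdp : DifferentiableAt ℝ (fun q => ((1:ℝ) - ‖φ q‖ ^ 2)⁻¹) p :=
    (hrd.differentiable (by simp)) p
  -- invOneSub derivatives
  have ht : Z1 (invOneSub φ) p = (1/2 : ℂ) * ((R1 : ℂ) - Complex.I * (R2 : ℂ)) := by
    unfold Z1 invOneSub
    rw [fderiv_ofReal' hrdp, fderiv_ofReal' hrdp, ← hR1, ← hR2]
  have htb : Z1b (invOneSub φ) p = (1/2 : ℂ) * ((R1 : ℂ) + Complex.I * (R2 : ℂ)) := by
    unfold Z1b invOneSub
    rw [fderiv_ofReal' hrdp, fderiv_ofReal' hrdp, ← hR1, ← hR2]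
  -- norm-square casts
  have hnormq : ∀ z : ℂ, ((‖z‖ ^ 2 : ℝ) : ℂ) = z * (starRingEnd ℂ) z := by
    intro z
    rw [← Complex.normSq_eq_norm_sq, Complex.mul_conj]
  have hnorm2 : ((‖φ p‖ : ℝ) : ℂ) ^ 2 = φ p * (starRingEnd ℂ) (φ p) := by
    rw [← Complex.ofReal_pow]; exact hnormq (φ p)
  have h0 : (1 : ℂ) - φ p * (starRingEnd ℂ) (φ p) ≠ 0 := by
    rw [← hnorm2, ← Complex.ofReal_pow, ← Complex.ofReal_one, ← Complex.ofReal_sub]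
    exact Complex.ofReal_ne_zero.mpr (hSne p)
  have h0' : (1 : ℂ) - (starRingEnd ℂ) (φ p) * φ p ≠ 0 := by
    rwa [mul_comm]
  have hF2 : ((Ff φ p : ℝ) : ℂ) * ((Ff φ p : ℝ) : ℂ)
      = ((1 : ℂ) - φ p * (starRingEnd ℂ) (φ p))⁻¹ := by
    rw [← hnorm2, ← Complex.ofReal_pow, ← Complex.ofReal_one, ← Complex.ofReal_sub,
      ← Complex.ofReal_inv, ← Complex.ofReal_mul, ← hsq]
    norm_cast
    ring
  -- coframe evaluations
  have hTh1 : ThetaC p (ee1 p) = 0 := by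
    simp [ThetaC, Theta, ee1]
  have hTh2 : ThetaC p (ee2 p) = 0 := by
    simp [ThetaC, Theta, ee2]
  have h011 : th01 p (ee1 p) = 1 := by simp [th01, ee1]
  have h012 : th01 p (ee2 p) = Complex.I := by simp [th01, ee2]
  have h01b1 : th01b p (ee1 p) = 1 := by simp [th01b, ee1]
  have h01b2 : th01b p (ee2 p) = -Complex.I := by simp [th01b, ee2]
  -- connection form evaluations
  have hce1 : conn φ p (ee1 p)
      = -((1/2 : ℂ) * (1 - ((‖φ p‖ : ℝ) : ℂ) ^ 2) * (R1 : ℂ)) + connC1 φ p - connC2 φ p := by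
    simp only [conn, hlnF, ContinuousLinearMap.coe_smul', Pi.smul_apply, smul_eq_mul,
      hTh1, h011, h01b1]
    rw [← hR1]
    push_cast
    ring
  have hce2 : conn φ p (ee2 p)
      = -((1/2 : ℂ) * (1 - ((‖φ p‖ : ℝ) : ℂ) ^ 2) * (R2 : ℂ))
        + Complex.I * connC1 φ p + Complex.I * connC2 φ p := by
    simp only [conn, hlnF, ContinuousLinearMap.coe_smul', Pi.smul_apply, smul_eq_mul,
      hTh2, h012, h01b2]
    rw [← hR2]
    push_cast
    ring
  have hconnAt : connAtZ1b φ p = ((Ff φ p : ℝ) : ℂ) *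
      (-((1/2 : ℂ) * (1 - ((‖φ p‖ : ℝ) : ℂ) ^ 2) * Z1b (invOneSub φ) p) - connC2 φ p
        + φ p * (-((1/2 : ℂ) * (1 - ((‖φ p‖ : ℝ) : ℂ) ^ 2) * Z1 (invOneSub φ) p) + connC1 φ p)) := by
    simp only [connAtZ1b, hce1, hce2]
    rw [ht, htb]
    ring_nf
    simp only [Complex.I_sq]
    ring
  -- derivative of the (complexified) factor F
  have hFcd : DifferentiableAt ℝ (fun q => ((Ff φ q : ℝ) : ℂ)) p :=
    Complex.ofRealCLM.differentiableAt.comp p hFf_diff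
  have hZ1Fc : Z1 (fun q => ((Ff φ q : ℝ) : ℂ)) p
      = ((Ff φ p : ℝ) : ℂ) * ((1/2 : ℂ) * (1 - ((‖φ p‖ : ℝ) : ℂ) ^ 2) * Z1 (invOneSub φ) p) := by
    rw [ht]
    unfold Z1
    rw [fderiv_ofReal' hFf_diff, fderiv_ofReal' hFf_diff, hFderiv]
    simp only [ContinuousLinearMap.coe_smul', Pi.smul_apply, smul_eq_mul]
    rw [← hR1, ← hR2]
    push_cast
    ring
  have hZ1bFc : Z1b (fun q => ((Ff φ q : ℝ) : ℂ)) p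
      = ((Ff φ p : ℝ) : ℂ) * ((1/2 : ℂ) * (1 - ((‖φ p‖ : ℝ) : ℂ) ^ 2) * Z1b (invOneSub φ) p) := by
    rw [htb]
    unfold Z1b
    rw [fderiv_ofReal' hFf_diff, fderiv_ofReal' hFf_diff, hFderiv]
    simp only [ContinuousLinearMap.coe_smul', Pi.smul_apply, smul_eq_mul]
    rw [← hR1, ← hR2]
    push_cast
    ring
  -- differentiability of the first-order part
  have hcφd : DifferentiableAt ℝ (fun q => (starRingEnd ℂ) (φ q)) p := (hcφ.differentiable (by simp)) p
  have hZ1vd : DifferentiableAt ℝ (Z1 (fun q => ((u q : ℝ) : ℂ))) p := (hZ1v.differentiable (by simp)) p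
  have hZ1bvd : DifferentiableAt ℝ (Z1b (fun q => ((u q : ℝ) : ℂ))) p := (hZ1bv.differentiable (by simp)) p
  have hWd : DifferentiableAt ℝ
      (fun q => Z1 (fun x => ((u x : ℝ) : ℂ)) q + (starRingEnd ℂ) (φ q) * Z1b (fun x => ((u x : ℝ) : ℂ)) q) p :=
    hZ1vd.add (hcφd.mul hZ1bvd)
  -- Leibniz expansions
  have hZ1bW : Z1b (fun q => Z1 (fun x => ((u x : ℝ) : ℂ)) q
        + (starRingEnd ℂ) (φ q) * Z1b (fun x => ((u x : ℝ) : ℂ)) q) p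
      = Z1b (Z1 (fun x => ((u x : ℝ) : ℂ))) p
        + ((starRingEnd ℂ) (Z1 φ p) * Z1b (fun x => ((u x : ℝ) : ℂ)) p
          + (starRingEnd ℂ) (φ p) * Z1b (Z1b (fun x => ((u x : ℝ) : ℂ))) p) := by
    rw [Z1b_add' hZ1vd (hcφd.fun_mul hZ1bvd), Z1b_mul' hcφd hZ1bvd, Z1b_conj'' hφd]
  have hZ1W : Z1 (fun q => Z1 (fun x => ((u x : ℝ) : ℂ)) q
        + (starRingEnd ℂ) (φ q) * Z1b (fun x => ((u x : ℝ) : ℂ)) q) p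
      = Z1 (Z1 (fun x => ((u x : ℝ) : ℂ))) p
        + ((starRingEnd ℂ) (Z1b φ p) * Z1b (fun x => ((u x : ℝ) : ℂ)) p
          + (starRingEnd ℂ) (φ p) * Z1 (Z1b (fun x => ((u x : ℝ) : ℂ))) p) := by
    rw [Z1_add' hZ1vd (hcφd.fun_mul hZ1bvd), Z1_mul' hcφd hZ1bvd, Z1_conj'' hφd]
  have heG1 : Z1b (Z1full φ fun q => ((u q : ℝ) : ℂ)) p
      = Z1b (fun q => ((Ff φ q : ℝ) : ℂ)) p
          * (Z1 (fun x => ((u x : ℝ) : ℂ)) p + (starRingEnd ℂ) (φ p) * Z1b (fun x => ((u x : ℝ) : ℂ)) p)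
        + ((Ff φ p : ℝ) : ℂ) * Z1b (fun q => Z1 (fun x => ((u x : ℝ) : ℂ)) q
          + (starRingEnd ℂ) (φ q) * Z1b (fun x => ((u x : ℝ) : ℂ)) q) p :=
    Z1b_mul' (f := fun q => ((Ff φ q : ℝ) : ℂ))
      (g := fun q => Z1 (fun x => ((u x : ℝ) : ℂ)) q
        + (starRingEnd ℂ) (φ q) * Z1b (fun x => ((u x : ℝ) : ℂ)) q) hFcd hWd
  have heG2 : Z1 (Z1full φ fun q => ((u q : ℝ) : ℂ)) p
      = Z1 (fun q => ((Ff φ q : ℝ) : ℂ)) p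
          * (Z1 (fun x => ((u x : ℝ) : ℂ)) p + (starRingEnd ℂ) (φ p) * Z1b (fun x => ((u x : ℝ) : ℂ)) p)
        + ((Ff φ p : ℝ) : ℂ) * Z1 (fun q => Z1 (fun x => ((u x : ℝ) : ℂ)) q
          + (starRingEnd ℂ) (φ q) * Z1b (fun x => ((u x : ℝ) : ℂ)) q) p :=
    Z1_mul' (f := fun q => ((Ff φ q : ℝ) : ℂ))
      (g := fun q => Z1 (fun x => ((u x : ℝ) : ℂ)) q
        + (starRingEnd ℂ) (φ q) * Z1b (fun x => ((u x : ℝ) : ℂ)) q) hFcd hWd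
  -- the key factorisation
  have hX : Z1bfull φ (Z1full φ fun q => ((u q : ℝ) : ℂ)) p
        - connAtZ1b φ p * Z1full φ (fun q => ((u q : ℝ) : ℂ)) p
      = ((Ff φ p : ℝ) : ℂ) * ((Ff φ p : ℝ) : ℂ) *
        (Z1b (Z1 (fun x => ((u x : ℝ) : ℂ))) p
          + (starRingEnd ℂ) (Z1 φ p) * Z1b (fun x => ((u x : ℝ) : ℂ)) p
          + (starRingEnd ℂ) (φ p) * Z1b (Z1b (fun x => ((u x : ℝ) : ℂ))) p
          + φ p * (Z1 (Z1 (fun x => ((u x : ℝ) : ℂ))) p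
            + (starRingEnd ℂ) (Z1b φ p) * Z1b (fun x => ((u x : ℝ) : ℂ)) p
            + (starRingEnd ℂ) (φ p) * Z1 (Z1b (fun x => ((u x : ℝ) : ℂ))) p)
          + ((1 - ((‖φ p‖ : ℝ) : ℂ) ^ 2) * Z1b (invOneSub φ) p
            + φ p * ((1 - ((‖φ p‖ : ℝ) : ℂ) ^ 2) * Z1 (invOneSub φ) p)
            + connC2 φ p - φ p * connC1 φ p)
            * (Z1 (fun x => ((u x : ℝ) : ℂ)) p + (starRingEnd ℂ) (φ p) * Z1b (fun x => ((u x : ℝ) : ℂ)) p)) := by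
    have hZbf : Z1bfull φ (Z1full φ fun q => ((u q : ℝ) : ℂ)) p
        = ((Ff φ p : ℝ) : ℂ) * (Z1b (Z1full φ fun q => ((u q : ℝ) : ℂ)) p
          + φ p * Z1 (Z1full φ fun q => ((u q : ℝ) : ℂ)) p) := rfl
    have hZfp : Z1full φ (fun q => ((u q : ℝ) : ℂ)) p
        = ((Ff φ p : ℝ) : ℂ) * (Z1 (fun x => ((u x : ℝ) : ℂ)) p
          + (starRingEnd ℂ) (φ p) * Z1b (fun x => ((u x : ℝ) : ℂ)) p) := rfl
    rw [hZbf, heG1, heG2, hZ1bW, hZ1W, hZ1bFc, hZ1Fc, hZfp, hconnAt]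
    ring
  -- conjugation facts
  have hcd : Z1b (cconj φ) p = (starRingEnd ℂ) (Z1 φ p) := Z1b_conj' hφd
  have hvconj : Z1b (fun q => ((u q : ℝ) : ℂ)) = cconj (Z1 (fun q => ((u q : ℝ) : ℂ))) :=
    funext fun q => Z1b_ofReal' ((hu.differentiable (by simp)) q)
  have hA : Z1b (Z1b fun q => ((u q : ℝ) : ℂ)) p
      = (starRingEnd ℂ) (Z1 (Z1 fun q => ((u q : ℝ) : ℂ)) p) := by
    rw [hvconj]; exact Z1b_conj' hZ1vd
  have hBc : Z1 (Z1b fun q => ((u q : ℝ) : ℂ)) p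
      = (starRingEnd ℂ) (Z1b (Z1 fun q => ((u q : ℝ) : ℂ)) p) := by
    rw [hvconj]; exact Z1_conj' hZ1vd
  have hDb : Z1b (fun q => ((u q : ℝ) : ℂ)) p
      = (starRingEnd ℂ) (Z1 (fun q => ((u q : ℝ) : ℂ)) p) :=
    Z1b_ofReal' ((hu.differentiable (by simp)) p)
  -- derivatives of ‖φ‖²
  have hsqfun : (fun q => ((‖φ q‖ ^ 2 : ℝ) : ℂ)) = fun q => φ q * (starRingEnd ℂ) (φ q) :=
    funext fun q => hnormq (φ q)
  have hN : Z1 (fun q => ((‖φ q‖ ^ 2 : ℝ) : ℂ)) p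
      = Z1 φ p * (starRingEnd ℂ) (φ p) + φ p * (starRingEnd ℂ) (Z1b φ p) := by
    rw [hsqfun, Z1_mul' hφd hcφd, Z1_conj'' hφd]
  have hNb : Z1b (fun q => ((‖φ q‖ ^ 2 : ℝ) : ℂ)) p
      = Z1b φ p * (starRingEnd ℂ) (φ p) + φ p * (starRingEnd ℂ) (Z1 φ p) := by
    rw [hsqfun, Z1b_mul' hφd hcφd, Z1b_conj'' hφd]
  have hct : (starRingEnd ℂ) (Z1 (invOneSub φ) p) = Z1b (invOneSub φ) p := by
    rw [ht, htb]
    simp only [map_mul, map_sub, map_add, map_div₀, map_one, map_ofNat,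
      Complex.conj_I, Complex.conj_ofReal]
    ring
  have hctb : (starRingEnd ℂ) (Z1b (invOneSub φ) p) = Z1 (invOneSub φ) p := by
    rw [ht, htb]
    simp only [map_mul, map_sub, map_add, map_div₀, map_one, map_ofNat,
      Complex.conj_I, Complex.conj_ofReal]
    ring
  have hiv : invOneSub φ p = ((1:ℂ) - φ p * (starRingEnd ℂ) (φ p))⁻¹ := by
    unfold invOneSub
    rw [Complex.ofReal_inv]
    congr 1
    push_cast
    rw [hnorm2]
  have hdiv : (((1 + ‖φ p‖ ^ 2) / (1 - ‖φ p‖ ^ 2) : ℝ) : ℂ)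
      = (1 + φ p * (starRingEnd ℂ) (φ p)) * ((1:ℂ) - φ p * (starRingEnd ℂ) (φ p))⁻¹ := by
    rw [Complex.ofReal_div, div_eq_mul_inv]
    push_cast
    rw [hnorm2]
  -- final assembly
  simp only [subLap, subLap0]
  rw [hX, hF2]
  simp only [connC1, connC2]
  rw [hcd, hN, hNb, hA, hBc, hDb, hiv, hdiv]
  push_cast
  rw [hnorm2]
  simp only [map_neg, map_add, map_sub, map_mul, map_inv₀, map_div₀, map_one, map_ofNat,
    Complex.conj_conj, Complex.conj_I, Complex.conj_ofReal]
  rw [hct, hctb]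
  have hmir : ((1:ℂ) - (starRingEnd ℂ) (φ p) * φ p)⁻¹
      = ((1:ℂ) - φ p * (starRingEnd ℂ) (φ p))⁻¹ := by rw [mul_comm]
  rw [hmir]
  field_simp [h0]
  ring
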